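/- arXiv:1801.04462 — 3 statements merged into one kernel-verified Lean document; each statement's English description precedes it below -/
import Mathlib

section
/- Let Y^1, ..., Y^k ∈ {0,1}^n be ρ-correlated uniform binary strings for 0 < ρ < 1 (i.e., Y^i = X + Z^i mod 2 with X uniform and Z^i independent with i.i.d. Bernoulli((1-√ρ)/2) coordinates). Then for any nonnegative functions f_1, ..., f_k on {0,1}^n, E[∏_{i=1}^k f_i(Y^i)] ≤ max_{1≤i≤k} E[∏_{j=1}^k f_i(Y^j)]. -/
open Finset

abbrev Cube (n : ℕ) := Fin n → ZMod 2

noncomputable def EE {n : ℕ} (f : Cube n → ℝ) : ℝ := (∑ x : Cube n, f x) / 2 ^ n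

def W {n : ℕ} (A : Finset (Fin n)) (x : Cube n) : ℝ := (-1 : ℝ) ^ (∑ i ∈ A, (x i).val)

noncomputable def fhat {n : ℕ} (f : Cube n → ℝ) (A : Finset (Fin n)) : ℝ :=
  EE (fun x => f x * W A x)

noncomputable def wt {n : ℕ} (ε : ℝ) (z : Cube n) : ℝ :=
  ∏ i, if z i = 0 then 1 - ε else ε

noncomputable def Tnoise {n : ℕ} (ε : ℝ) (f : Cube n → ℝ) (x : Cube n) : ℝ :=
  ∑ z : Cube n, wt ε z * f (x + z)

/-- Joint expectation E[∏ i, F i (Yⁱ)] where Yⁱ = X + Zⁱ, X uniform on the cube and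
the Zⁱ independent with i.i.d. Bernoulli(ε) coordinates. -/
noncomputable def corrE {n k : ℕ} (ε : ℝ) (F : Fin k → (Cube n → ℝ)) : ℝ :=
  (∑ x : Cube n, ∑ z : Fin k → Cube n, (∏ i, wt ε (z i)) * ∏ i, F i (x + z i)) / 2 ^ n

/-!
Conditioning on `X`, the noisy copies `Yⁱ` are independent, so the correlation is the average
over `x` of `∏ i, T fᵢ (x)`, where `T` is the noise operator. By AM-GM this product is at most
`(1/k) ∑ i, (T fᵢ (x))ᵏ`, and averaging `(T fᵢ)ᵏ` over `x` is exactly the correlation obtained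
when every player uses `fᵢ`. An average of `k` numbers is at most their maximum.
-/

theorem Real.card_mul_prod_le_sum_pow_card {ι : Type*} (s : Finset ι) (g : ι → ℝ)
    (hg : ∀ i ∈ s, 0 ≤ g i) :
    #s * ∏ i ∈ s, g i ≤ ∑ i ∈ s, g i ^ #s := by
  rcases s.eq_empty_or_nonempty with rfl | hs
  · simp
  have hcard : (#s : ℝ) ≠ 0 := by exact_mod_cast hs.card_pos.ne'
  have amgm := Real.geom_mean_le_arith_mean_weighted s (fun _ => (#s : ℝ)⁻¹)
    (fun i => g i ^ #s) (fun _ _ => by positivity)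
    (by rw [sum_const, nsmul_eq_mul, mul_inv_cancel₀ hcard])
    (fun i hi => pow_nonneg (hg i hi) _)
  have hroot : ∀ i ∈ s, (g i ^ #s) ^ (#s : ℝ)⁻¹ = g i := fun i hi => by
    rw [← Real.rpow_natCast, ← Real.rpow_mul (hg i hi), mul_inv_cancel₀ hcard, Real.rpow_one]
  rw [prod_congr rfl hroot, ← mul_sum] at amgm
  calc (#s : ℝ) * ∏ i ∈ s, g i ≤ #s * ((#s : ℝ)⁻¹ * ∑ i ∈ s, g i ^ #s) := by gcongr
    _ = ∑ i ∈ s, g i ^ #s := by field_simp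

section Noise

variable {n k : ℕ} {ε : ℝ}

theorem wt_nonneg (hε₀ : 0 ≤ ε) (hε₁ : ε ≤ 1) (z : Cube n) : 0 ≤ wt ε z :=
  prod_nonneg fun i _ => by split <;> linarith

theorem Tnoise_nonneg (hε₀ : 0 ≤ ε) (hε₁ : ε ≤ 1) {f : Cube n → ℝ} (hf : ∀ x, 0 ≤ f x)
    (x : Cube n) : 0 ≤ Tnoise ε f x :=
  sum_nonneg fun z _ => mul_nonneg (wt_nonneg hε₀ hε₁ z) (hf _)

theorem corrE_eq_sum_prod_Tnoise (F : Fin k → Cube n → ℝ) :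
    corrE ε F = (∑ x : Cube n, ∏ i, Tnoise ε (F i) x) / 2 ^ n := by
  unfold corrE Tnoise
  congr 1
  refine sum_congr rfl fun x _ => ?_
  rw [prod_univ_sum, Fintype.piFinset_univ]
  exact sum_congr rfl fun z _ => prod_mul_distrib.symm

theorem corrE_const (f : Cube n → ℝ) :
    corrE ε (fun _ : Fin k => f) = (∑ x : Cube n, Tnoise ε f x ^ k) / 2 ^ n := by
  simp only [corrE_eq_sum_prod_Tnoise, prod_const, card_univ, Fintype.card_fin]

theorem card_mul_corrE_le_sum_corrE_const (hε₀ : 0 ≤ ε) (hε₁ : ε ≤ 1)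
    {F : Fin k → Cube n → ℝ} (hF : ∀ i x, 0 ≤ F i x) :
    k * corrE ε F ≤ ∑ i, corrE ε (fun _ : Fin k => F i) := by
  have hamgm (x : Cube n) : k * ∏ i, Tnoise ε (F i) x ≤ ∑ i, Tnoise ε (F i) x ^ k := by
    simpa using Real.card_mul_prod_le_sum_pow_card univ (fun i => Tnoise ε (F i) x)
      fun i _ => Tnoise_nonneg hε₀ hε₁ (hF i) x
  rw [corrE_eq_sum_prod_Tnoise]
  simp only [corrE_const, ← sum_div, mul_div_assoc']
  rw [sum_comm, mul_sum]
  gcongr with x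
  exact hamgm x

end Noise

theorem corr_le_max_same_function_general (n k : ℕ) (hk : 0 < k) (ρ ε : ℝ)
    (hρ₁ : ρ < 1) (hε : ε = (1 - Real.sqrt ρ) / 2)
    (F : Fin k → (Cube n → ℝ)) (hF : ∀ i x, 0 ≤ F i x) :
    corrE ε F ≤
      Finset.univ.sup' (Finset.univ_nonempty_iff.mpr ⟨⟨0, hk⟩⟩)
        (fun i => corrE ε (fun _ : Fin k => F i)) := by
  have hsqrt : Real.sqrt ρ < 1 := (Real.sqrt_lt' one_pos).mpr (by linarith)
  have hε₀ : 0 ≤ ε := by rw [hε]; linarith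
  have hε₁ : ε ≤ 1 := by rw [hε]; linarith [Real.sqrt_nonneg ρ]
  set M := Finset.univ.sup' (Finset.univ_nonempty_iff.mpr ⟨⟨0, hk⟩⟩)
    (fun i => corrE ε (fun _ : Fin k => F i))
  have hsum_le : ∑ i, corrE ε (fun _ : Fin k => F i) ≤ k * M := by
    simpa using sum_le_card_nsmul univ _ M fun i _ =>
      le_sup' (fun j => corrE ε fun _ : Fin k => F j) (mem_univ i)
  have hk' : (0 : ℝ) < k := by exact_mod_cast hk
  exact le_of_mul_le_mul_left
    ((card_mul_corrE_le_sum_corrE_const hε₀ hε₁ hF).trans hsum_le) hk'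

/-- players maximize their correlation by using the same function. -/
theorem corr_le_max_same_function (n k : ℕ) (hk : 0 < k) (ρ ε : ℝ)
    (hρ₀ : 0 < ρ) (hρ₁ : ρ < 1) (hε : ε = (1 - Real.sqrt ρ) / 2)
    (F : Fin k → (Cube n → ℝ)) (hF : ∀ i x, 0 ≤ F i x) :
    corrE ε F ≤
      Finset.univ.sup' (Finset.univ_nonempty_iff.mpr ⟨⟨0, hk⟩⟩)
        (fun i => corrE ε (fun _ : Fin k => F i)) :=
  corr_le_max_same_function_general n k hk ρ ε hρ₁ hε F hF
end

section
/- Let Y^1, Y^2 ∈ {0,1}^n be ρ-correlated uniform binary strings and f: {0,1}^n → {0,1} a balanced Boolean function. Then P(f(Y^1) = f(Y^2)) = 2·E[f(Y^1) f(Y^2)], and this agreement probability is maximized over balanced Boolean functions by the dictator function f(x) = x_1 for every ρ ∈ (0,1). -/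
open Finset

/-- P(f(Y¹) = g(Y²)) for ρ-correlated strings Y¹ = X + Z¹, Y² = X + Z². -/
noncomputable def pAgree2 {n : ℕ} (ε : ℝ) (f g : Cube n → ℝ) : ℝ :=
  (∑ x : Cube n, ∑ z₁ : Cube n, ∑ z₂ : Cube n,
    wt ε z₁ * wt ε z₂ * (if f (x + z₁) = g (x + z₂) then (1:ℝ) else 0)) / 2 ^ n

/-- E[f(Y¹) g(Y²)] for ρ-correlated strings. -/
noncomputable def corr2 {n : ℕ} (ε : ℝ) (f g : Cube n → ℝ) : ℝ :=
  (∑ x : Cube n, ∑ z₁ : Cube n, ∑ z₂ : Cube n,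
    wt ε z₁ * wt ε z₂ * (f (x + z₁) * g (x + z₂))) / 2 ^ n

/-!
For `0/1`-valued `f` one has `1[f a = f b] = 1 - f a - f b + 2 f a f b`, so the agreement
probability is `1 - 2 E f + 2 E[f(Y¹) f(Y²)]`, which is `2 E[f(Y¹) f(Y²)]` when `f` is balanced.

Given `X` the two strings are independent, so `E[f(Y¹) f(Y²)] = E[(T f)²]` for the noise
operator `T = Tnoise ε`. The characters `W A` are eigenfunctions of `T` with eigenvalue
`(1 - 2ε)^|A|`, hence `E[(T f)²] = ∑_A ρ^|A| f̂(A)²`. For a balanced Boolean `f`, Parseval gives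
`∑_A f̂(A)² = E f² = E f = 1/2` with `f̂(∅)² = 1/4`; since `ρ^|A| ≤ ρ` for `A ≠ ∅` the correlation
is at most `(1 + ρ)/4`, which the dictator `x ↦ x i = (1 - W {i} x)/2` attains.
-/

section

variable {n : ℕ}

lemma neg_one_pow_val_add (a b : ZMod 2) :
    (-1 : ℝ) ^ (a + b).val = (-1) ^ a.val * (-1) ^ b.val := by
  rw [ZMod.val_add, ← pow_add, ← neg_one_pow_eq_pow_mod_two]

lemma one_add_neg_one_pow_val (a : ZMod 2) :
    1 + (-1 : ℝ) ^ a.val = if a = 0 then 2 else 0 := by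
  obtain rfl | rfl : a = 0 ∨ a = 1 := by revert a; decide
  · norm_num
  · norm_num [ZMod.val_one]

lemma sum_cube_prod (g : Fin n → ZMod 2 → ℝ) :
    ∑ z : Cube n, ∏ i, g i (z i) = ∏ i, (g i 0 + g i 1) := by
  rw [← Fintype.prod_sum]
  exact prod_congr rfl fun i _ => Fin.sum_univ_two (g i)

lemma EE_const (c : ℝ) : EE (fun _ : Cube n => c) = c := by
  simp [EE, card_univ]

lemma EE_add (f g : Cube n → ℝ) : EE (fun x => f x + g x) = EE f + EE g := by
  simp only [EE, sum_add_distrib, add_div]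

lemma EE_sub (f g : Cube n → ℝ) : EE (fun x => f x - g x) = EE f - EE g := by
  simp only [EE, sum_sub_distrib, sub_div]

lemma EE_const_mul (c : ℝ) (f : Cube n → ℝ) : EE (fun x => c * f x) = c * EE f := by
  simp only [EE, ← mul_sum, mul_div_assoc]

lemma W_eq_prod (A : Finset (Fin n)) (x : Cube n) :
    W A x = ∏ i ∈ A, (-1 : ℝ) ^ (x i).val :=
  (prod_pow_eq_pow_sum _ _ _).symm

lemma W_empty (x : Cube n) : W ∅ x = 1 := by simp [W]

lemma W_add (A : Finset (Fin n)) (x y : Cube n) : W A (x + y) = W A x * W A y := by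
  simp only [W_eq_prod, Pi.add_apply, neg_one_pow_val_add, prod_mul_distrib]

lemma W_mul_self (A : Finset (Fin n)) (x : Cube n) : W A x * W A x = 1 := by
  rw [W, ← pow_add, Even.neg_one_pow ⟨_, rfl⟩]

lemma sum_W_mul_W (A B : Finset (Fin n)) :
    ∑ x : Cube n, W A x * W B x = if A = B then 2 ^ n else 0 := by
  set g : Fin n → ZMod 2 → ℝ := fun i v =>
    (if i ∈ A then (-1) ^ v.val else 1) * (if i ∈ B then (-1) ^ v.val else 1)
  have hprod (x : Cube n) : W A x * W B x = ∏ i, g i (x i) := by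
    simp only [g, prod_mul_distrib, prod_ite_mem, univ_inter, W_eq_prod]
  have hcoord (i : Fin n) : g i 0 + g i 1 = if (i ∈ A ↔ i ∈ B) then 2 else 0 := by
    by_cases hA : i ∈ A <;> by_cases hB : i ∈ B <;> norm_num [g, hA, hB, ZMod.val_one]
  simp only [hprod, sum_cube_prod, hcoord, prod_ite_zero, prod_const, card_univ,
    Fintype.card_fin, mem_univ, true_implies, ← Finset.ext_iff]

lemma EE_W (A : Finset (Fin n)) : EE (W A) = if A = ∅ then 1 else 0 := by
  have h := sum_W_mul_W A ∅
  simp only [W_empty, mul_one] at h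
  rw [EE, h]
  split_ifs <;> simp

lemma sum_W_apply (z : Cube n) :
    ∑ A : Finset (Fin n), W A z = if z = 0 then 2 ^ n else 0 := by
  have h := prod_one_add (f := fun i => (-1 : ℝ) ^ (z i).val) univ
  rw [powerset_univ] at h
  simp only [← W_eq_prod] at h
  simp [← h, one_add_neg_one_pow_val, prod_ite_zero, funext_iff]

lemma fourier_inversion (f : Cube n → ℝ) (x : Cube n) :
    ∑ A : Finset (Fin n), fhat f A * W A x = f x := by
  have hchar (y : Cube n) : y + x = 0 ↔ y = x := by
    rw [add_eq_zero_iff_eq_neg, show -x = x from funext fun i => ZMod.neg_eq_self_mod_two _]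
  calc ∑ A : Finset (Fin n), fhat f A * W A x
      = (∑ y : Cube n, f y * ∑ A : Finset (Fin n), W A (y + x)) / 2 ^ n := by
        simp only [fhat, EE, div_mul_eq_mul_div, ← sum_div, sum_mul, mul_sum, W_add, mul_assoc]
        rw [sum_comm]
    _ = f x := by
        simp only [sum_W_apply, hchar, mul_ite, mul_zero, sum_ite_eq', mem_univ, if_true]
        field_simp

lemma EE_fourier_mul_fourier (a b : Finset (Fin n) → ℝ) :
    EE (fun x : Cube n => (∑ A, a A * W A x) * ∑ B, b B * W B x) = ∑ A, a A * b A := by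
  calc EE (fun x : Cube n => (∑ A, a A * W A x) * ∑ B, b B * W B x)
      = (∑ x : Cube n, ∑ A, ∑ B, a A * b B * (W A x * W B x)) / 2 ^ n := by
        simp only [EE, sum_mul_sum, mul_mul_mul_comm]
    _ = (∑ A, ∑ B, a A * b B * ∑ x : Cube n, W A x * W B x) / 2 ^ n := by
        simp only [mul_sum]
        rw [sum_comm]
        exact congrArg (· / _) (sum_congr rfl fun A _ => sum_comm)
    _ = ∑ A, a A * b A := by
        simp only [sum_W_mul_W, mul_ite, mul_zero, sum_ite_eq, mem_univ, if_true, ← sum_mul]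
        field_simp

lemma sum_fhat_sq (f : Cube n → ℝ) :
    ∑ A, fhat f A ^ 2 = EE (fun x => f x ^ 2) := by
  simp only [sq]
  conv_rhs => simp only [← fourier_inversion f]
  exact (EE_fourier_mul_fourier _ _).symm

lemma fhat_empty (f : Cube n → ℝ) : fhat f ∅ = EE f := by
  simp [fhat, W_empty]

lemma sum_wt (ε : ℝ) : ∑ z : Cube n, wt ε z = 1 := by
  simp [wt, sum_cube_prod (fun _ v => if v = 0 then 1 - ε else ε)]

lemma sum_wt_mul_W (ε : ℝ) (A : Finset (Fin n)) :
    ∑ z : Cube n, wt ε z * W A z = (1 - 2 * ε) ^ A.card := by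
  set g : Fin n → ZMod 2 → ℝ := fun i v =>
    (if v = 0 then 1 - ε else ε) * (if i ∈ A then (-1) ^ v.val else 1)
  have hprod (z : Cube n) : wt ε z * W A z = ∏ i, g i (z i) := by
    simp only [g, wt, prod_mul_distrib, prod_ite_mem, univ_inter, W_eq_prod]
  have hcoord (i : Fin n) : g i 0 + g i 1 = if i ∈ A then 1 - 2 * ε else 1 := by
    by_cases hA : i ∈ A <;> norm_num [g, hA, ZMod.val_one]; ring
  simp only [hprod, sum_cube_prod, hcoord, prod_ite_mem, univ_inter, prod_const]

lemma Tnoise_W (ε : ℝ) (A : Finset (Fin n)) (x : Cube n) :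
    Tnoise ε (W A) x = (1 - 2 * ε) ^ A.card * W A x := by
  simp only [Tnoise, W_add, mul_left_comm (wt ε _) (W A x), ← mul_sum, sum_wt_mul_W]
  exact mul_comm _ _

lemma Tnoise_eq_sum (ε : ℝ) (f : Cube n → ℝ) (x : Cube n) :
    Tnoise ε f x = ∑ A, (1 - 2 * ε) ^ A.card * fhat f A * W A x := by
  calc Tnoise ε f x = ∑ A, fhat f A * Tnoise ε (W A) x := by
        simp only [Tnoise, ← fourier_inversion f, mul_sum, mul_left_comm (wt ε _)]
        exact sum_comm
    _ = _ := sum_congr rfl fun A _ => by rw [Tnoise_W]; ring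

lemma EE_Tnoise (ε : ℝ) (f : Cube n → ℝ) : EE (Tnoise ε f) = EE f := by
  have hshift (z : Cube n) : ∑ x, f (x + z) = ∑ x, f x :=
    Fintype.sum_equiv (Equiv.addRight z) _ _ fun _ => rfl
  simp only [EE, Tnoise]
  rw [sum_comm]
  simp only [← mul_sum, hshift, ← sum_mul, sum_wt, one_mul]

lemma corr2_eq_EE_Tnoise (ε : ℝ) (f g : Cube n → ℝ) :
    corr2 ε f g = EE (fun x => Tnoise ε f x * Tnoise ε g x) := by
  simp only [corr2, EE, Tnoise, sum_mul_sum, mul_mul_mul_comm]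

lemma corr2_self_eq_sum (ε : ℝ) (f : Cube n → ℝ) :
    corr2 ε f f = ∑ A, ((1 - 2 * ε) ^ 2) ^ A.card * fhat f A ^ 2 := by
  simp only [corr2_eq_EE_Tnoise, Tnoise_eq_sum, EE_fourier_mul_fourier]
  exact sum_congr rfl fun A _ => by rw [← pow_mul, pow_mul']; ring

lemma pAgree2_self_eq (ε : ℝ) {f : Cube n → ℝ} (hf : ∀ x, f x = 0 ∨ f x = 1) :
    pAgree2 ε f f = 1 - 2 * EE f + 2 * corr2 ε f f := by
  have hind (a b : ℝ) (ha : a = 0 ∨ a = 1) (hb : b = 0 ∨ b = 1) :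
      (if a = b then (1 : ℝ) else 0) = 1 - a - b + 2 * (a * b) := by
    rcases ha with rfl | rfl <;> rcases hb with rfl | rfl <;> norm_num
  have hpoint (x : Cube n) :
      ∑ z₁ : Cube n, ∑ z₂ : Cube n,
        wt ε z₁ * wt ε z₂ * (if f (x + z₁) = f (x + z₂) then (1 : ℝ) else 0)
      = 1 - 2 * Tnoise ε f x + 2 * (Tnoise ε f x * Tnoise ε f x) := by
    have hexpand (z₁ z₂ : Cube n) :
        wt ε z₁ * wt ε z₂ * (if f (x + z₁) = f (x + z₂) then (1 : ℝ) else 0)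
        = wt ε z₁ * wt ε z₂ - wt ε z₁ * f (x + z₁) * wt ε z₂ - wt ε z₁ * (wt ε z₂ * f (x + z₂))
          + 2 * (wt ε z₁ * f (x + z₁) * (wt ε z₂ * f (x + z₂))) := by
      rw [hind _ _ (hf _) (hf _)]
      ring
    simp only [Tnoise, hexpand, sum_add_distrib, sum_sub_distrib, ← sum_mul, ← mul_sum, sum_wt]
    ring
  calc pAgree2 ε f f
      = EE (fun x => 1 - 2 * Tnoise ε f x + 2 * (Tnoise ε f x * Tnoise ε f x)) := by
        simp only [pAgree2, hpoint, EE]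
    _ = _ := by
        rw [EE_add, EE_sub, EE_const, EE_const_mul, EE_const_mul, EE_Tnoise, corr2_eq_EE_Tnoise]

def dictator (i : Fin n) (y : Cube n) : ℝ := if y i = 1 then 1 else 0

lemma dictator_eq_zero_or_one (i : Fin n) (y : Cube n) : dictator i y = 0 ∨ dictator i y = 1 := by
  unfold dictator
  split_ifs <;> simp

lemma dictator_eq (i : Fin n) : dictator i = fun y : Cube n => 1 / 2 - 1 / 2 * W {i} y := by
  ext y
  rw [W_eq_prod, prod_singleton, dictator]
  obtain h | h : y i = 0 ∨ y i = 1 := by generalize y i = a; revert a; decide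
  · simp [h]
  · norm_num [h, ZMod.val_one]

lemma EE_dictator (i : Fin n) : EE (dictator i) = 1 / 2 := by
  simp only [dictator_eq, EE_sub, EE_const, EE_const_mul, EE_W]
  simp

lemma Tnoise_dictator (ε : ℝ) (i : Fin n) (x : Cube n) :
    Tnoise ε (dictator i) x = 1 / 2 - 1 / 2 * ((1 - 2 * ε) * W {i} x) := by
  have h := Tnoise_W ε {i} x
  rw [card_singleton, pow_one] at h
  simp only [Tnoise] at h ⊢
  simp only [dictator_eq, mul_sub, sum_sub_distrib, ← sum_mul, sum_wt, mul_left_comm _ (1 / 2 : ℝ),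
    ← mul_sum, h, one_mul]

lemma corr2_dictator (ε : ℝ) (i : Fin n) :
    corr2 ε (dictator i) (dictator i) = (1 + (1 - 2 * ε) ^ 2) / 4 := by
  have h (x : Cube n) : Tnoise ε (dictator i) x * Tnoise ε (dictator i) x
      = (1 + (1 - 2 * ε) ^ 2) / 4 - (1 - 2 * ε) / 2 * W {i} x := by
    rw [Tnoise_dictator]
    linear_combination ((1 - 2 * ε) ^ 2 / 4) * W_mul_self {i} x
  simp only [corr2_eq_EE_Tnoise, h, EE_sub, EE_const, EE_const_mul, EE_W]
  simp

lemma corr2_self_le_corr2_dictator {ε : ℝ} (hε : (1 - 2 * ε) ^ 2 ≤ 1) {f : Cube n → ℝ}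
    (hf : ∀ x, f x = 0 ∨ f x = 1) (hbal : EE f = 1 / 2) (i : Fin n) :
    corr2 ε f f ≤ corr2 ε (dictator i) (dictator i) := by
  set ρ := (1 - 2 * ε) ^ 2
  have hweight : ∑ A ∈ univ.erase ∅, fhat f A ^ 2 = 1 / 4 := by
    have hsq : (fun x => f x ^ 2) = f := funext fun x => by rcases hf x with h | h <;> simp [h]
    rw [sum_erase_eq_sub (mem_univ _), sum_fhat_sq, hsq, fhat_empty, hbal]
    norm_num
  have hdamp : ∑ A ∈ univ.erase ∅, ρ ^ A.card * fhat f A ^ 2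
      ≤ ∑ A ∈ univ.erase ∅, ρ * fhat f A ^ 2 := by
    gcongr with A hA
    have hA : A.card ≠ 0 := card_ne_zero.mpr (nonempty_of_ne_empty (ne_of_mem_erase hA))
    exact pow_le_of_le_one (sq_nonneg _) hε hA
  rw [corr2_self_eq_sum, corr2_dictator, ← add_sum_erase _ _ (mem_univ ∅), card_empty, pow_zero,
    one_mul, fhat_empty, hbal]
  rw [← mul_sum, hweight] at hdamp
  linarith

end

theorem agreement_two_players_general (n : ℕ) (hn : 0 < n) (ρ ε : ℝ)
    (hρ₁ : ρ < 1) (hε : ε = (1 - Real.sqrt ρ) / 2) :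
    (∀ f : Cube n → ℝ, (∀ x, f x = 0 ∨ f x = 1) → EE f = 1/2 →
      pAgree2 ε f f = 2 * corr2 ε f f) ∧
    (∀ f : Cube n → ℝ, (∀ x, f x = 0 ∨ f x = 1) → EE f = 1/2 →
      pAgree2 ε f f ≤
        pAgree2 ε (fun y : Cube n => if y ⟨0, hn⟩ = 1 then (1:ℝ) else 0)
          (fun y : Cube n => if y ⟨0, hn⟩ = 1 then (1:ℝ) else 0)) := by
  have hagree (f : Cube n → ℝ) (hf : ∀ x, f x = 0 ∨ f x = 1) (hbal : EE f = 1 / 2) :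
      pAgree2 ε f f = 2 * corr2 ε f f := by
    rw [pAgree2_self_eq ε hf, hbal]
    ring
  have hρ : (1 - 2 * ε) ^ 2 ≤ 1 := by
    rw [hε, show 1 - 2 * ((1 - √ρ) / 2) = √ρ by ring]
    exact pow_le_one₀ (Real.sqrt_nonneg ρ) (Real.sqrt_le_one.mpr hρ₁.le)
  refine ⟨hagree, fun f hf hbal => ?_⟩
  show _ ≤ pAgree2 ε (dictator ⟨0, hn⟩) (dictator ⟨0, hn⟩)
  rw [hagree f hf hbal, hagree _ (dictator_eq_zero_or_one _) (EE_dictator _)]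
  exact mul_le_mul_of_nonneg_left (corr2_self_le_corr2_dictator hρ hf hbal _) zero_le_two

/-- for balanced Boolean f, P(f(Y¹)=f(Y²)) = 2·E[f(Y¹)f(Y²)], and the
agreement probability is maximized by the dictator function. -/
theorem agreement_two_players (n : ℕ) (hn : 0 < n) (ρ ε : ℝ)
    (hρ₀ : 0 < ρ) (hρ₁ : ρ < 1) (hε : ε = (1 - Real.sqrt ρ) / 2) :
    (∀ f : Cube n → ℝ, (∀ x, f x = 0 ∨ f x = 1) → EE f = 1/2 →
      pAgree2 ε f f = 2 * corr2 ε f f) ∧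
    (∀ f : Cube n → ℝ, (∀ x, f x = 0 ∨ f x = 1) → EE f = 1/2 →
      pAgree2 ε f f ≤
        pAgree2 ε (fun y : Cube n => if y ⟨0, hn⟩ = 1 then (1:ℝ) else 0)
          (fun y : Cube n => if y ⟨0, hn⟩ = 1 then (1:ℝ) else 0)) :=
  agreement_two_players_general n hn ρ ε hρ₁ hε
end

section
/- Let Φ be a convex function and ε ∈ [0,1/2]. For every Boolean function f: {0,1}^n → {0,1} there exists a monotone Boolean function g with E[g] = E[f] such that E[Φ(T_ε f)] ≤ E[Φ(T_ε g)]. -/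
/-
Compression in direction `i` puts, on every edge `{x, x + eᵢ}`, the larger value of `f` at the
endpoint with `xᵢ = 1`. It keeps `f` Boolean and preserves its mean. Since `ε ≤ 1/2`, the kernel
`wt ε z` does not increase when a coordinate of `z` flips from 0 to 1; hence `T_ε` of the
compressed function has the same sum on every edge as `T_ε f` but a gap
`|T_ε f x - T_ε f (x + eᵢ)|` at least as large, and by convexity of `Φ` the sum of `Φ ∘ T_ε` does
not decrease. A compression that changes `f` strictly increases `∑ₓ f x · |x|`, with `|x|` the
Hamming weight. So among the finitely many Boolean functions with the mean of `f` and at least its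
value of `∑ Φ ∘ T_ε`, one maximizing this potential is fixed by every compression, i.e. monotone
along every edge, and therefore monotone.
-/

open Finset

lemma ConvexOn.add_le_add_of_abs_sub_le {Φ : ℝ → ℝ} (hΦ : ConvexOn ℝ Set.univ Φ) {a b c d : ℝ}
    (hsum : a + b = c + d) (habs : |a - b| ≤ |c - d|) : Φ a + Φ b ≤ Φ c + Φ d := by
  wlog hcd : c ≤ d generalizing c d
  · rw [add_comm (Φ c)]
    exact this (by linarith) (by rwa [abs_sub_comm d]) (by linarith)
  rw [abs_sub_comm c, abs_of_nonneg (sub_nonneg.2 hcd), abs_le] at habs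
  rcases hcd.eq_or_lt with rfl | hlt
  · obtain rfl : a = c := by linarith
    obtain rfl : b = a := by linarith
    rfl
  -- `a` and `b` are the convex combinations `t c + (1 - t) d` and `(1 - t) c + t d`
  set t := (d - a) / (d - c)
  have hdc : d - c ≠ 0 := (sub_pos.2 hlt).ne'
  have ht₀ : 0 ≤ t := div_nonneg (by linarith) (by linarith)
  have ht₁ : 0 ≤ 1 - t := by
    rw [sub_nonneg, div_le_one (by linarith)]; linarith
  have ht : t * (d - c) = d - a := div_mul_cancel₀ _ hdc
  have ha : t * c + (1 - t) * d = a := by linear_combination -ht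
  have hb : t * d + (1 - t) * c = b := by linear_combination ht - hsum
  have h₁ := hΦ.2 (Set.mem_univ c) (Set.mem_univ d) ht₀ ht₁ (add_sub_cancel t 1)
  have h₂ := hΦ.2 (Set.mem_univ d) (Set.mem_univ c) ht₀ ht₁ (add_sub_cancel t 1)
  simp only [smul_eq_mul, ha, hb] at h₁ h₂
  linarith

theorem Fintype.two_mul_sum_eq_sum_add {G R : Type*} [AddGroup G] [Fintype G]
    [NonAssocSemiring R] (a : G) (F : G → R) :
    2 * ∑ x, F x = ∑ x, (F x + F (x + a)) := by
  rw [Finset.sum_add_distrib, two_mul,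
    Fintype.sum_equiv (Equiv.addRight a) (fun x => F (x + a)) F fun _ => rfl]

lemma ZMod.two_cases (c : ZMod 2) : c = 0 ∨ c = 1 := by
  revert c; decide

namespace Cube

variable {n : ℕ}

local notation "𝐞" i:max => (Pi.single i (1 : ZMod 2) : Cube _)

lemma add_single_add_single (x : Cube n) (i : Fin n) :
    x + 𝐞 i + 𝐞 i = x := by
  rw [add_assoc, ZModModule.add_self, add_zero]

@[simp]
lemma add_single_apply_self (x : Cube n) (i : Fin n) : (x + 𝐞 i) i = x i + 1 := by
  simp

@[simp]
lemma add_single_apply_of_ne (x : Cube n) {i j : Fin n} (h : j ≠ i) :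
    (x + 𝐞 i) j = x j := by
  simp [h]

lemma hammingNorm_add_single_add_one {x : Cube n} {i : Fin n} (hx : x i = 1) :
    hammingNorm (x + 𝐞 i) + 1 = hammingNorm x := by
  have hsupp : ({j | (x + 𝐞 i) j ≠ 0} : Finset (Fin n)) =
      ({j | x j ≠ 0} : Finset (Fin n)).erase i := by
    ext j
    by_cases hj : j = i
    · subst hj; simp [hx, ZModModule.add_self]
    · simp [hj]
  rw [hammingNorm, hammingNorm, hsupp, card_erase_add_one (by simp [hx])]

lemma hammingNorm_sub_hammingNorm_add_single (x : Cube n) (i : Fin n) :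
    (hammingNorm x : ℝ) - hammingNorm (x + 𝐞 i) = if x i = 1 then 1 else -1 := by
  rcases ZMod.two_cases (x i) with hx | hx
  · have h := hammingNorm_add_single_add_one (x := x + 𝐞 i) (i := i) (by simp [hx])
    rw [add_single_add_single] at h
    rw [if_neg (by simp [hx]), ← h]
    push_cast; ring
  · rw [if_pos hx, ← hammingNorm_add_single_add_one hx]
    push_cast; ring

noncomputable def compress (i : Fin n) (f : Cube n → ℝ) (x : Cube n) : ℝ :=
  if x i = 1 then max (f x) (f (x + 𝐞 i)) else min (f x) (f (x + 𝐞 i))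

variable (i : Fin n) (f : Cube n → ℝ)

lemma compress_apply_eq_or_eq (x : Cube n) :
    compress i f x = f x ∨ compress i f x = f (x + 𝐞 i) := by
  unfold compress
  split_ifs
  exacts [max_choice _ _, min_choice _ _]

lemma compress_apply_mem {s : Set ℝ} (hf : ∀ x, f x ∈ s) (x : Cube n) : compress i f x ∈ s := by
  rcases compress_apply_eq_or_eq i f x with h | h <;> rw [h] <;> apply hf

lemma compress_pair_of_apply_eq_one {x : Cube n} (hx : x i = 1) :
    compress i f x = max (f x) (f (x + 𝐞 i)) ∧
      compress i f (x + 𝐞 i) = min (f x) (f (x + 𝐞 i)) := by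
  have hx' : (x + 𝐞 i) i ≠ 1 := by simp [hx]
  simp only [compress, if_pos hx, if_neg hx', add_single_add_single, min_comm, and_self]

lemma compress_add_compress_add_single (x : Cube n) :
    compress i f x + compress i f (x + 𝐞 i) = f x + f (x + 𝐞 i) := by
  rcases ZMod.two_cases (x i) with hx | hx
  · obtain ⟨h₁, h₂⟩ := compress_pair_of_apply_eq_one i f (x := x + 𝐞 i) (by simp [hx])
    rw [add_single_add_single] at h₁ h₂
    rw [h₁, h₂, min_comm, max_comm, min_add_max]
  · obtain ⟨h₁, h₂⟩ := compress_pair_of_apply_eq_one i f hx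
    rw [h₁, h₂, max_add_min]

lemma compress_sub_compress_add_single (x : Cube n) :
    compress i f x - compress i f (x + 𝐞 i) =
      (if x i = 1 then 1 else -1) * |f x - f (x + 𝐞 i)| := by
  rcases ZMod.two_cases (x i) with hx | hx
  · obtain ⟨h₁, h₂⟩ := compress_pair_of_apply_eq_one i f (x := x + 𝐞 i) (by simp [hx])
    rw [add_single_add_single] at h₁ h₂
    rw [h₁, h₂, if_neg (by simp [hx]), min_comm, max_comm, abs_sub_comm, ← max_sub_min_eq_abs]
    ring
  · obtain ⟨h₁, h₂⟩ := compress_pair_of_apply_eq_one i f hx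
    rw [h₁, h₂, if_pos hx, max_sub_min_eq_abs, one_mul, abs_sub_comm]

lemma compress_sub_mul_sign (x : Cube n) :
    (compress i f x - f x) * (if x i = 1 then 1 else -1) = |compress i f x - f x| := by
  unfold compress
  split_ifs
  · rw [mul_one, abs_of_nonneg (sub_nonneg.2 (le_max_left _ _))]
  · rw [abs_of_nonpos (sub_nonpos.2 (min_le_left _ _))]
    ring

lemma sum_compress : ∑ x, compress i f x = ∑ x, f x := by
  refine mul_left_cancel₀ two_ne_zero ?_
  rw [Fintype.two_mul_sum_eq_sum_add (𝐞 i), Fintype.two_mul_sum_eq_sum_add (𝐞 i)]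
  exact sum_congr rfl fun x _ => compress_add_compress_add_single i f x

lemma two_mul_sum_compress_sub_mul_hammingNorm :
    2 * ∑ x, (compress i f x - f x) * (hammingNorm x : ℝ) = ∑ x, |compress i f x - f x| := by
  rw [Fintype.two_mul_sum_eq_sum_add (𝐞 i)]
  refine sum_congr rfl fun x _ => ?_
  have hflip : compress i f (x + 𝐞 i) - f (x + 𝐞 i) = -(compress i f x - f x) := by
    linarith [compress_add_compress_add_single i f x]
  rw [hflip, ← compress_sub_mul_sign, ← hammingNorm_sub_hammingNorm_add_single]
  ring

lemma sum_mul_hammingNorm_lt_compress (h : compress i f ≠ f) :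
    ∑ x, f x * (hammingNorm x : ℝ) < ∑ x, compress i f x * (hammingNorm x : ℝ) := by
  obtain ⟨x₀, hx₀⟩ := Function.ne_iff.1 h
  have hpos : 0 < ∑ x, |compress i f x - f x| :=
    sum_pos' (fun x _ => abs_nonneg _) ⟨x₀, mem_univ _, abs_pos.2 (sub_ne_zero.2 hx₀)⟩
  rw [← two_mul_sum_compress_sub_mul_hammingNorm i f] at hpos
  simp only [sub_mul, sum_sub_distrib] at hpos
  linarith

lemma le_apply_add_single_of_compress_eq (h : compress i f = f) {x : Cube n} (hx : x i = 0) :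
    f x ≤ f (x + 𝐞 i) := by
  have hfx := congr_fun h x
  rw [compress, if_neg (by simp [hx])] at hfx
  exact hfx ▸ min_le_right _ _

omit i f in
lemma le_apply_add_sum_single {g : Cube n → ℝ}
    (hg : ∀ x i, x i = 0 → g x ≤ g (x + 𝐞 i)) (s : Finset (Fin n)) :
    ∀ x, (∀ i ∈ s, x i = 0) → g x ≤ g (x + ∑ i ∈ s, 𝐞 i) := by
  induction s using Finset.induction_on with
  | empty => simp
  | insert a s ha ih =>
    intro x hx
    rw [sum_insert ha, ← add_assoc]
    refine (hg x a (hx a (mem_insert_self a s))).trans (ih _ fun j hj => ?_)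
    rw [add_single_apply_of_ne _ (ne_of_mem_of_not_mem hj ha), hx j (mem_insert_of_mem hj)]

omit i f in
lemma monotone_of_le_apply_add_single {g : Cube n → ℝ}
    (hg : ∀ x i, x i = 0 → g x ≤ g (x + 𝐞 i)) {x y : Cube n}
    (hxy : ∀ i, (x i).val ≤ (y i).val) : g x ≤ g y := by
  have hzmod : ∀ a b : ZMod 2, a.val ≤ b.val → a ≠ b → a = 0 ∧ b = a + 1 := by decide
  have hy : y = x + ∑ i ∈ {i | x i ≠ y i}, 𝐞 i := by
    funext j
    by_cases hj : x j = y j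
    · simp [Finset.sum_apply, Pi.single_apply, hj]
    · simp [Finset.sum_apply, Pi.single_apply, (hzmod _ _ (hxy j) hj).2]
  rw [hy]
  exact le_apply_add_sum_single hg _ x fun i hi => (hzmod _ _ (hxy i) (mem_filter.1 hi).2).1

omit f in
lemma wt_sub_wt_add_single (ε : ℝ) (z : Cube n) :
    wt ε z - wt ε (z + 𝐞 i) = (if z i = 0 then 1 else -1) *
      ((1 - 2 * ε) * ∏ j ∈ univ.erase i, if z j = 0 then 1 - ε else ε) := by
  have hrest : ∏ j ∈ univ.erase i, (if (z + 𝐞 i) j = 0 then 1 - ε else ε) =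
      ∏ j ∈ univ.erase i, if z j = 0 then 1 - ε else ε :=
    prod_congr rfl fun j hj => by rw [add_single_apply_of_ne _ (ne_of_mem_erase hj)]
  rw [wt, wt, ← mul_prod_erase univ _ (mem_univ i), ← mul_prod_erase univ _ (mem_univ i), hrest,
    add_single_apply_self]
  rcases ZMod.two_cases (z i) with hz | hz <;> simp [hz, ZModModule.add_self] <;> ring

omit f in
lemma wt_sub_wt_add_single_eq_sign_mul_abs {ε : ℝ} (hε : ε ∈ Set.Icc (0 : ℝ) (1 / 2))
    (z : Cube n) :
    wt ε z - wt ε (z + 𝐞 i) = (if z i = 0 then 1 else -1) * |wt ε z - wt ε (z + 𝐞 i)| := by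
  have hrest : 0 ≤ (1 - 2 * ε) * ∏ j ∈ univ.erase i, if z j = 0 then 1 - ε else ε :=
    mul_nonneg (by linarith [hε.2]) (prod_nonneg fun j _ => by split_ifs <;> linarith [hε.1, hε.2])
  rw [wt_sub_wt_add_single, abs_mul, abs_of_nonneg hrest]
  split_ifs <;> simp

lemma Tnoise_sub_Tnoise_add_single (ε : ℝ) (x : Cube n) :
    Tnoise ε f x - Tnoise ε f (x + 𝐞 i) = ∑ z, wt ε z * (f (x + z) - f (x + z + 𝐞 i)) := by
  simp only [Tnoise, mul_sub, sum_sub_distrib, add_right_comm x]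

lemma Tnoise_add_Tnoise_add_single (ε : ℝ) (x : Cube n) :
    Tnoise ε f x + Tnoise ε f (x + 𝐞 i) = ∑ z, wt ε z * (f (x + z) + f (x + z + 𝐞 i)) := by
  simp only [Tnoise, mul_add, sum_add_distrib, add_right_comm x]

lemma two_mul_Tnoise_sub_Tnoise_add_single (ε : ℝ) (x : Cube n) :
    2 * (Tnoise ε f x - Tnoise ε f (x + 𝐞 i)) =
      ∑ z, (wt ε z - wt ε (z + 𝐞 i)) * (f (x + z) - f (x + z + 𝐞 i)) := by
  rw [Tnoise_sub_Tnoise_add_single, Fintype.two_mul_sum_eq_sum_add (𝐞 i)]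
  refine sum_congr rfl fun z _ => ?_
  rw [← add_assoc, add_single_add_single]
  ring

lemma Tnoise_add_Tnoise_add_single_compress (ε : ℝ) (x : Cube n) :
    Tnoise ε (compress i f) x + Tnoise ε (compress i f) (x + 𝐞 i) =
      Tnoise ε f x + Tnoise ε f (x + 𝐞 i) := by
  simp only [Tnoise_add_Tnoise_add_single, compress_add_compress_add_single]

lemma abs_Tnoise_sub_le_compress_of_apply_eq_one {ε : ℝ} (hε : ε ∈ Set.Icc (0 : ℝ) (1 / 2))
    {x : Cube n} (hx : x i = 1) :
    |Tnoise ε f x - Tnoise ε f (x + 𝐞 i)| ≤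
      Tnoise ε (compress i f) x - Tnoise ε (compress i f) (x + 𝐞 i) := by
  -- with `x i = 1`, the signs of the two factors in each summand agree
  have hterm : ∀ z, (wt ε z - wt ε (z + 𝐞 i)) *
      (compress i f (x + z) - compress i f (x + z + 𝐞 i)) =
        |(wt ε z - wt ε (z + 𝐞 i)) * (f (x + z) - f (x + z + 𝐞 i))| := by
    intro z
    rw [compress_sub_compress_add_single, wt_sub_wt_add_single_eq_sign_mul_abs i hε, abs_mul,
      abs_mul]
    rcases ZMod.two_cases (z i) with hz | hz <;> simp [hx, hz]
  have h := abs_sum_le_sum_abs (fun z => (wt ε z - wt ε (z + 𝐞 i)) *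
    (f (x + z) - f (x + z + 𝐞 i))) univ
  rw [← two_mul_Tnoise_sub_Tnoise_add_single, ← sum_congr rfl fun z _ => hterm z,
    ← two_mul_Tnoise_sub_Tnoise_add_single, abs_mul, abs_two] at h
  linarith

lemma abs_Tnoise_sub_le_compress {ε : ℝ} (hε : ε ∈ Set.Icc (0 : ℝ) (1 / 2)) (x : Cube n) :
    |Tnoise ε f x - Tnoise ε f (x + 𝐞 i)| ≤
      |Tnoise ε (compress i f) x - Tnoise ε (compress i f) (x + 𝐞 i)| := by
  rcases ZMod.two_cases (x i) with hx | hx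
  · have h := abs_Tnoise_sub_le_compress_of_apply_eq_one i f hε (x := x + 𝐞 i) (by simp [hx])
    rw [add_single_add_single, abs_sub_comm] at h
    exact h.trans (abs_sub_comm (Tnoise ε (compress i f) x) _ ▸ le_abs_self _)
  · exact (abs_Tnoise_sub_le_compress_of_apply_eq_one i f hε hx).trans (le_abs_self _)

lemma sum_comp_Tnoise_le_compress {Φ : ℝ → ℝ} (hΦ : ConvexOn ℝ Set.univ Φ) {ε : ℝ}
    (hε : ε ∈ Set.Icc (0 : ℝ) (1 / 2)) :
    ∑ x, Φ (Tnoise ε f x) ≤ ∑ x, Φ (Tnoise ε (compress i f) x) := by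
  refine le_of_mul_le_mul_left ?_ two_pos
  rw [Fintype.two_mul_sum_eq_sum_add (𝐞 i), Fintype.two_mul_sum_eq_sum_add (𝐞 i)]
  exact sum_le_sum fun x _ => hΦ.add_le_add_of_abs_sub_le
    (Tnoise_add_Tnoise_add_single_compress i f ε x).symm (abs_Tnoise_sub_le_compress i f hε x)

end Cube

/-- for convex Φ, E[Φ(T_ε f)] is maximized by some monotone function
with the same mean. -/
theorem exists_monotone_maximizer (n : ℕ) (Φ : ℝ → ℝ) (hΦ : ConvexOn ℝ Set.univ Φ)
    (ε : ℝ) (hε : ε ∈ Set.Icc (0:ℝ) (1/2))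
    (f : Cube n → ℝ) (hf : ∀ x, f x = 0 ∨ f x = 1) :
    ∃ g : Cube n → ℝ, (∀ x, g x = 0 ∨ g x = 1) ∧
      (∀ x y : Cube n, (∀ i, (x i).val ≤ (y i).val) → g x ≤ g y) ∧
      EE g = EE f ∧
      EE (fun x => Φ (Tnoise ε f x)) ≤ EE (fun x => Φ (Tnoise ε g x)) := by
  let S : Set (Cube n → ℝ) := {g | (∀ x, g x ∈ ({0, 1} : Set ℝ)) ∧ ∑ x, g x = ∑ x, f x ∧
    ∑ x, Φ (Tnoise ε f x) ≤ ∑ x, Φ (Tnoise ε g x)}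
  have hS : S.Finite :=
    (Set.Finite.pi (t := fun _ => ({0, 1} : Set ℝ)) fun _ => Set.toFinite _).subset
      fun g hg => Set.mem_univ_pi.2 hg.1
  obtain ⟨g, ⟨hg01, hgsum, hgΦ⟩, hgmax⟩ :=
    S.exists_max_image (fun g => ∑ x, g x * (hammingNorm x : ℝ)) hS ⟨f, hf, rfl, le_rfl⟩
  have hfixed (i : Fin n) : Cube.compress i g = g := by
    by_contra hne
    refine (hgmax _ ⟨Cube.compress_apply_mem i g hg01, (Cube.sum_compress i g).trans hgsum,
      hgΦ.trans (Cube.sum_comp_Tnoise_le_compress i g hΦ hε)⟩).not_gt ?_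
    exact Cube.sum_mul_hammingNorm_lt_compress i g hne
  refine ⟨g, hg01, fun x y => Cube.monotone_of_le_apply_add_single fun x i =>
    Cube.le_apply_add_single_of_compress_eq i g (hfixed i), ?_, ?_⟩
  · simp only [EE, hgsum]
  · simp only [EE]
    gcongr
end
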